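/- arXiv:2410.17872 — 2 statements merged into one kernel-verified Lean document; each statement's English description precedes it below -/
import Mathlib

section
/- For every (A,b) ∈ LTA(n,2)_{h2}^{h1}, every g ∈ W, and every f ∈ (O^c_{h1} ∩ O^c_{h2}) ∖ W, the coefficient of g in (A,b)·f vanishes: ⟨(A,b)·f⟩_g = 0. -/
open Finset

/-! Common setup: `R_n = F_2[x_0,…,x_{n−1}]/(x_i^2 − x_i)`.  A (squarefree) monomial is
identified with its index set `ind(g) ⊆ {0,…,n−1}`.  Reduced elements of `R_n` are
identified, via the (bijective) evaluation map `ev`, with Boolean functions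
`F_2^n → F_2`, i.e. with vectors in `F_2^N` indexed by the points of `F_2^n`. -/

/-- Monomials of `M_n`, identified with their index sets. -/
abbrev Mon (n : ℕ) := Finset (Fin n)

/-- Points of `F_2^n`. -/
abbrev Pt (n : ℕ) := Fin n → ZMod 2

/-- Elements of `R_n` (equivalently, vectors of `F_2^N`), identified with Boolean
functions via the evaluation map `ev`. -/
abbrev BF (n : ℕ) := Pt n → ZMod 2

variable {n : ℕ}

/-- `ev` of the monomial `∏_{i ∈ S} x_i`. -/
def evm (S : Mon n) : BF n := fun x => ∏ i ∈ S, x i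

/-- The coefficient `⟨f⟩_S` of the monomial `S` in the reduced polynomial represented by
the Boolean function `f` (binary Möbius inversion: `⟨f⟩_S = ∑_{supp x ⊆ S} f(x)`). -/
def mcoeff (f : BF n) (S : Mon n) : ZMod 2 :=
  ∑ x ∈ Finset.univ.filter (fun x : Pt n => ∀ i ∉ S, x i = 0), f x

/-- The row index `[g] = ∑_{i ∉ ind(g)} 2^i` of a monomial. -/
def rowIdx (S : Mon n) : ℕ := ∑ i ∈ Sᶜ, 2 ^ (i : ℕ)

/-- `Ovd h g` means `h ≺_o g`: `h` is a one-variable descendant of `g`, i.e. `g = h·x_i`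
for some `i ∉ ind(h)`, or `g = q·x_i`, `h = q·x_j` for a monomial `q` and `j < i`. -/
def Ovd (h g : Mon n) : Prop :=
  (∃ i ∉ h, g = insert i h) ∨
  (∃ (q : Mon n) (i j : Fin n), i ∉ q ∧ j ∉ q ∧ j < i ∧ g = insert i q ∧ h = insert j q)

/-- The standard partial order `≼` on monomials: `g ≼ h` iff some divisor `h'` of `h` with
`deg h' = deg g` dominates `g` coordinatewise after sorting the index lists increasingly. -/
def MonLE (g h : Mon n) : Prop :=
  ∃ h' ⊆ h, h'.card = g.card ∧
    List.Forall₂ (· ≤ ·) (Finset.sort g (· ≤ ·)) (Finset.sort h' (· ≤ ·))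

/-- `C(I)` is a decreasing monomial code. -/
def DecMonCode (I : Set (Mon n)) : Prop := ∀ h ∈ I, ∀ g, MonLE g h → g ∈ I

/-- The monomial code `C(I)`: the `F_2`-span of `{ev(g) : g ∈ I}`. -/
def code (I : Set (Mon n)) : Set (BF n) := ↑(Submodule.span (ZMod 2) (evm '' I))

/-- An element `(A,b)` of `LTA(n,2)`: `A` lower triangular with unit diagonal. -/
structure LTA (n : ℕ) where
  A : Matrix (Fin n) (Fin n) (ZMod 2)
  b : Pt n
  diag : ∀ i, A i i = 1
  lower : ∀ i j : Fin n, i < j → A i j = 0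

/-- The affine map `x ↦ Ax + b` on points. -/
def LTA.actPt (L : LTA n) (x : Pt n) : Pt n := L.A.mulVec x + L.b

/-- The action of `(A,b)` on `R_n` (equivalently on `F_2^N`):
`((A,b)·f)(x) = f(Ax+b)`, so that `(A,b)·ev(f) = ev((A,b)·f)`. -/
def LTA.act (L : LTA n) (f : BF n) : BF n := fun x => f (L.actPt x)

/-- Hamming weight. -/
def wt (f : BF n) : ℕ := (Finset.univ.filter (fun x => f x ≠ 0)).card

/-- Weight distribution of a set of vectors: `d ↦ |{x ∈ S : wt x = d}|`. -/
noncomputable def wdist (S : Set (BF n)) : ℕ → ℕ := fun d => Nat.card {x : BF n // x ∈ S ∧ wt x = d}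

/-- Membership in the subgroup `LTA(n,2)_{h2}^{h1}`: all strictly-lower-triangular entries of
`A` and all entries of `b` vanish except possibly the free parameters: for
`f ∈ O_{h1}∖O_{h2}∖D`, the entry `a_{s,t}` when `h1 = q·x_s`, `f = q·x_t`, `t < s`, and the
entry `b_r` when `h1 = f·x_r`; for `f ∈ O_{h2}∖O_{h1}∖D`, the entry `a_{s,t}` when
`h2 = q·x_s`, `f = q·x_t`, `t < s`, and the entry `b_r` when `h2 = f·x_r`. -/
def InSub (h1 h2 : Mon n) (O1 O2 D : Set (Mon n)) (L : LTA n) : Prop :=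
  (∀ s t : Fin n, t < s → L.A s t ≠ 0 →
    (∃ f ∈ ((O1 \ O2) \ D), ∃ q : Mon n, s ∉ q ∧ t ∉ q ∧ h1 = insert s q ∧ f = insert t q) ∨
    (∃ f ∈ ((O2 \ O1) \ D), ∃ q : Mon n, s ∉ q ∧ t ∉ q ∧ h2 = insert s q ∧ f = insert t q)) ∧
  (∀ r : Fin n, L.b r ≠ 0 →
    (∃ f ∈ ((O1 \ O2) \ D), r ∉ f ∧ h1 = insert r f) ∨
    (∃ f ∈ ((O2 \ O1) \ D), r ∉ f ∧ h2 = insert r f))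

/-- The standing context: a decreasing monomial code `C(I)` with `n ≥ 1`, last frozen index
`τ = max F` where `F = {0,…,N−1} ∖ {[g] : g ∈ I}`; `h1` the monomial of `I` of smallest row
index; `h2` the monomial of `I` of smallest row index among those with `[h1] < [h2]` that are
not one-variable descendants of `h1`; and the feasibility assumption
`|ind(h1)∖ind(h2)| ≤ 2`, `|ind(h2)∖ind(h1)| ≤ 2`. -/
structure Setup (n : ℕ) where
  npos : 1 ≤ n
  I : Set (Mon n)
  dec : DecMonCode I
  τ : ℕ
  τlt : τ < 2 ^ n
  τfrozen : τ ∉ rowIdx '' I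
  τmax : ∀ m < 2 ^ n, m ∉ rowIdx '' I → m ≤ τ
  h1 : Mon n
  h1mem : h1 ∈ I
  h1min : ∀ g ∈ I, rowIdx h1 ≤ rowIdx g
  h2 : Mon n
  h2mem : h2 ∈ I
  h12 : rowIdx h1 < rowIdx h2
  h2novd : ¬ Ovd h2 h1
  h2min : ∀ g ∈ I, rowIdx h1 < rowIdx g → ¬ Ovd g h1 → rowIdx h2 ≤ rowIdx g
  feas1 : (h1 \ h2).card ≤ 2
  feas2 : (h2 \ h1).card ≤ 2

namespace Setup

variable (C : Setup n)

/-- `O_{h1} = {f ∈ I : f ≺_o h1, [h2] < [f] < τ}`. -/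
def O1 : Set (Mon n) := {f | f ∈ C.I ∧ Ovd f C.h1 ∧ rowIdx C.h2 < rowIdx f ∧ rowIdx f < C.τ}

/-- `O_{h2} = {f ∈ I : f ≺_o h2, [f] < τ}`. -/
def O2 : Set (Mon n) := {f | f ∈ C.I ∧ Ovd f C.h2 ∧ rowIdx f < C.τ}

/-- `O^c_{h1} = {f ∈ I : f ∉ O_{h1}, [h2] < [f] < τ}`. -/
def O1c : Set (Mon n) := {f | f ∈ C.I ∧ f ∉ C.O1 ∧ rowIdx C.h2 < rowIdx f ∧ rowIdx f < C.τ}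

/-- `O^c_{h2} = {f ∈ I : f ∉ O_{h2}, [h2] < [f] < τ}`. -/
def O2c : Set (Mon n) := {f | f ∈ C.I ∧ f ∉ C.O2 ∧ rowIdx C.h2 < rowIdx f ∧ rowIdx f < C.τ}

/-- `D = {f ∈ O_{h1} ∪ O_{h2} : ∏_{j ∈ ind(h1)∩ind(h2)} x_j ∤ f}`. -/
def D : Set (Mon n) := {f | f ∈ C.O1 ∪ C.O2 ∧ ¬ (C.h1 ∩ C.h2 ⊆ f)}

/-- `T = {f ∈ I : [f] > τ}`. -/
def T : Set (Mon n) := {f | f ∈ C.I ∧ C.τ < rowIdx f}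

/-- `B = ((O_{h2}∖O_{h1}) ∩ D) ∪ (O^c_{h1} ∩ O^c_{h2}) ∪ T`. -/
def B : Set (Mon n) := ((C.O2 \ C.O1) ∩ C.D) ∪ (C.O1c ∩ C.O2c) ∪ C.T

/-- `(A,b) ∈ LTA(n,2)_{h2}^{h1}`. -/
def Mem (L : LTA n) : Prop := InSub C.h1 C.h2 C.O1 C.O2 C.D L

/-- `W = {g ∈ O^c_{h1} ∩ O^c_{h2} : ∃ (A,b) ∈ LTA(n,2)_{h2}^{h1}, ∃ p ∈ O_{h1}∖O_{h2}∖D,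
⟨(A,b)·g⟩_p ≠ 0}`. -/
def W : Set (Mon n) :=
  {g | g ∈ C.O1c ∩ C.O2c ∧
    ∃ L : LTA n, C.Mem L ∧ ∃ p ∈ ((C.O1 \ C.O2) \ C.D), mcoeff (L.act (evm g)) p ≠ 0}

/-- `L` and `L'` have equal values on all entries associated with `O_{h2}∖O_{h1}∖D`
in the definition of the subgroup `LTA(n,2)_{h2}^{h1}`. -/
def agreeO2 (L L' : LTA n) : Prop :=
  (∀ f ∈ ((C.O2 \ C.O1) \ C.D), ∀ (q : Mon n) (s t : Fin n),
      s ∉ q → t ∉ q → t < s → C.h2 = insert s q → f = insert t q → L.A s t = L'.A s t) ∧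
  (∀ f ∈ ((C.O2 \ C.O1) \ C.D), ∀ r : Fin n, r ∉ f → C.h2 = insert r f → L.b r = L'.b r)

end Setup

/-! Expanding `(A,b)·∏_{i∈f} x_i = ∏_{i∈f} (x_i + ∑_{t<i} a_{i,t} x_t + b_i)`, the coefficient of
a monomial is the parity of the number of ways to pick one term per factor producing it. For
`(A,b) ∈ LTA(n,2)_{h2}^{h1}` every free entry sits in a row of `h1 ∪ h2`, and every free entry of
`A` in a column outside `h1 ∪ h2`: this is where feasibility, `[h1] < [h2]` and the definitions of
`O_{h1}`, `O_{h2}`, `D` enter. Hence the variables of `h1 ∪ h2` in a produced monomial are exactly the rows whose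
factor contributed its own variable. So if `g` occurs in `(A,b)·f` and `p` occurs in
`(A₀,b₀)·g`, composing the two picks gives a pick for `f` producing `p`, and the element of
`LTA(n,2)_{h2}^{h1}` whose only free entries are the ones this pick uses admits it as its unique
pick producing `p`. Thus `⟨(A,b)·f⟩_g ≠ 0` with `g ∈ W` would put `f` in `W`. -/

lemma zmod2_eq_iff_ne_zero_iff {a b : ZMod 2} : a = b ↔ (a ≠ 0 ↔ b ≠ 0) := by
  revert a b; decide

lemma eq_empty_or_singleton_of_card_le_one {α : Type*} {S : Finset α} (h : S.card ≤ 1) :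
    S = ∅ ∨ ∃ a, S = {a} := by
  rcases Nat.le_one_iff_eq_zero_or_eq_one.mp h with h | h
  · exact Or.inl (card_eq_zero.mp h)
  · exact Or.inr (card_eq_one.mp h)

lemma rowIdx_insert {S : Mon n} {w : Fin n} (hw : w ∉ S) :
    rowIdx (insert w S) + 2 ^ (w : ℕ) = rowIdx S := by
  rw [rowIdx, rowIdx, compl_insert]
  exact sum_erase_add _ _ (mem_compl.mpr hw)

lemma rowIdx_add_sum_sdiff (S T : Mon n) :
    rowIdx S + ∑ i ∈ S \ T, 2 ^ (i : ℕ) = rowIdx (S ∩ T) := by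
  rw [rowIdx, rowIdx, ← sum_union (disjoint_left.mpr fun i hi hi' => by simp_all)]
  congr 1
  ext i
  simp only [mem_union, mem_compl, mem_sdiff, mem_inter]
  tauto

lemma rowIdx_insert_lt_insert {q : Mon n} {s t : Fin n} (hsq : s ∉ q) (htq : t ∉ q)
    (hts : t < s) : rowIdx (insert s q) < rowIdx (insert t q) := by
  have hs := rowIdx_insert hsq
  have ht := rowIdx_insert htq
  have : 2 ^ (t : ℕ) < 2 ^ (s : ℕ) := Nat.pow_lt_pow_right (by norm_num) hts
  omega

lemma ovd_of_rowIdx_lt {p h : Mon n} (hph : (p \ h).card ≤ 1) (hhp : (h \ p).card ≤ 1)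
    (hlt : rowIdx h < rowIdx p) : Ovd p h := by
  have key := (rowIdx_add_sum_sdiff p h).trans
    ((congrArg rowIdx (inter_comm p h)).trans (rowIdx_add_sum_sdiff h p).symm)
  rcases eq_empty_or_singleton_of_card_le_one hph with hp0 | ⟨w, hpw⟩ <;>
    rcases eq_empty_or_singleton_of_card_le_one hhp with hh0 | ⟨u, hhu⟩
  · simp only [hp0, hh0, sum_empty] at key
    omega
  · left
    refine ⟨u, fun hu => ?_, ?_⟩
    · simpa [hu] using hhu.ge (mem_singleton_self u)
    · rw [insert_eq, ← hhu, sdiff_union_of_subset (sdiff_eq_empty_iff_subset.mp hp0)]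
  · simp only [hpw, hh0, sum_empty, sum_singleton] at key
    have := Nat.two_pow_pos (w : ℕ)
    omega
  · simp only [hpw, hhu, sum_singleton] at key
    have hwu : w < u := by
      by_contra! hle
      have : 2 ^ (u : ℕ) ≤ 2 ^ (w : ℕ) := Nat.pow_le_pow_right (by norm_num) hle
      omega
    right
    refine ⟨h ∩ p, u, w, fun hu => ?_, fun hw => ?_, hwu, ?_, ?_⟩
    · simpa [mem_of_mem_inter_right hu] using hhu.ge (mem_singleton_self u)
    · simpa [mem_of_mem_inter_left hw] using hpw.ge (mem_singleton_self w)
    · rw [insert_eq, ← hhu, sdiff_union_inter]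
    · rw [insert_eq, ← hpw, inter_comm, sdiff_union_inter]

/-- Otherwise, by the feasibility bounds, `q·x_t` would differ from `h'` in at most one
variable on each side. -/
lemma notMem_of_swap {h h' q : Mon n} {s t : Fin n} (hsq : s ∉ q) (htq : t ∉ q) (hts : t ≠ s)
    (hh : h = insert s q) (hK : h ∩ h' ⊆ insert t q)
    (hfeas : (h \ h').card ≤ 2) (hfeas' : (h' \ h).card ≤ 2)
    (hlt : rowIdx h' < rowIdx (insert t q)) (hnovd : ¬ Ovd (insert t q) h') : t ∉ h' := by
  intro ht
  have hs : s ∉ h' := fun hs' => by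
    have := hK (mem_inter.mpr ⟨hh ▸ mem_insert_self s q, hs'⟩)
    simp_all [eq_comm]
  subst hh
  refine hnovd (ovd_of_rowIdx_lt ?_ ?_ hlt)
  · have hsub : insert t q \ h' ⊆ (insert s q \ h').erase s := by
      intro j hj
      simp only [mem_sdiff, mem_insert, mem_erase] at hj ⊢
      grind
    have := card_le_card hsub
    rw [card_erase_of_mem (by simp [hs])] at this
    omega
  · have hsub : h' \ insert t q ⊆ (h' \ insert s q).erase t := by
      intro j hj
      simp only [mem_sdiff, mem_insert, mem_erase] at hj ⊢
      grind
    have := card_le_card hsub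
    rw [card_erase_of_mem (by simp [ht, hts, htq])] at this
    omega

/-- Expanding `∏_{i ∈ f} (Ax+b)_i`, a term picks for each `i ∈ f` either a variable
`x_j` (`some j`) or the constant `b_i` (`none`); indices outside `f` pick `none`. -/
def choiceMon (χ : Fin n → Option (Fin n)) : Mon n := univ.filter fun j => ∃ i, χ i = some j

lemma mem_choiceMon {χ : Fin n → Option (Fin n)} {j : Fin n} :
    j ∈ choiceMon χ ↔ ∃ i, χ i = some j := by
  simp [choiceMon]

lemma prod_elim_eq_evm (χ : Fin n → Option (Fin n)) (x : Pt n) :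
    ∏ i, (χ i).elim 1 x = evm (choiceMon χ) x := by
  rw [zmod2_eq_iff_ne_zero_iff, evm, prod_ne_zero_iff, prod_ne_zero_iff]
  simp only [mem_univ, true_implies, mem_choiceMon, forall_exists_index]
  refine ⟨fun h j i hi => by simpa [hi] using h i, fun h i => ?_⟩
  cases hi : χ i with
  | none => simp
  | some j => exact h j i hi

lemma mcoeff_evm (S g : Mon n) : mcoeff (evm S) g = if S = g then 1 else 0 := by
  have hsupp : univ.filter (fun x : Pt n => ∀ i ∉ g, x i = 0)
      = Fintype.piFinset fun i => if i ∈ g then univ else {0} := by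
    ext x
    simp only [mem_filter, mem_univ, true_and, Fintype.mem_piFinset]
    refine forall_congr' fun i => ?_
    split_ifs with hi <;> simp [hi]
  have hfactor : ∀ i, ∑ a ∈ (if i ∈ g then univ else {0} : Finset (ZMod 2)),
      (if i ∈ S then a else 1) = if (i ∈ S ↔ i ∈ g) then (1 : ZMod 2) else 0 := by
    intro i
    by_cases hS : i ∈ S <;> by_cases hg : i ∈ g <;> simp [hS, hg] <;> decide
  calc mcoeff (evm S) g
      = ∑ x ∈ Fintype.piFinset (fun i => if i ∈ g then univ else {0}),
          ∏ i, (if i ∈ S then x i else 1) := by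
        rw [mcoeff, hsupp]
        refine sum_congr rfl fun x _ => ?_
        rw [evm, prod_ite_mem, univ_inter]
    _ = if S = g then 1 else 0 := by
        rw [← prod_univ_sum _ fun i a => if i ∈ S then a else 1,
          prod_congr rfl fun i _ => hfactor i, prod_boole]
        simp [Finset.ext_iff]

namespace LTA

/-- The coefficient of `x_j` (`o = some j`) or of the constant `1` (`o = none`) in `(Ax+b)_i`. -/
def coeff (L : LTA n) (i : Fin n) (o : Option (Fin n)) : ZMod 2 := o.elim (L.b i) (L.A i)

lemma actPt_apply (L : LTA n) (x : Pt n) (i : Fin n) :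
    L.actPt x i = ∑ o, L.coeff i o * o.elim 1 x := by
  rw [Fintype.sum_option]
  simp [coeff, actPt, Matrix.mulVec, dotProduct, add_comm]

/-- `χ` indexes a nonzero term of the expansion of `(A,b)·∏_{i ∈ f} x_i`. -/
def Admissible (L : LTA n) (f : Mon n) (χ : Fin n → Option (Fin n)) : Prop :=
  ∀ i, (i ∈ f → L.coeff i (χ i) ≠ 0) ∧ (i ∉ f → χ i = none)

instance (L : LTA n) (f : Mon n) : DecidablePred (L.Admissible f) :=
  fun _ => inferInstanceAs (Decidable (∀ _, _))

/-- Indices outside `f` contribute the factor `1`, as the choice `none`. -/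
def weight (L : LTA n) (f : Mon n) (i : Fin n) (o : Option (Fin n)) : ZMod 2 :=
  if i ∈ f then L.coeff i o else if o = none then 1 else 0

lemma prod_weight (L : LTA n) (f : Mon n) (χ : Fin n → Option (Fin n)) :
    ∏ i, L.weight f i (χ i) = if L.Admissible f χ then 1 else 0 := by
  have hfac : ∀ i, L.weight f i (χ i)
      = if (i ∈ f → L.coeff i (χ i) ≠ 0) ∧ (i ∉ f → χ i = none) then 1 else 0 := by
    intro i
    by_cases hi : i ∈ f
    · simp only [weight, hi, if_true, true_implies, not_true_eq_false, false_implies, and_true]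
      generalize L.coeff i (χ i) = a
      revert a; decide
    · by_cases hc : χ i = none <;> simp [weight, hi, hc]
  rw [prod_congr rfl fun i _ => hfac i, prod_boole]
  simp only [mem_univ, true_implies]
  rfl

lemma act_evm_apply (L : LTA n) (f : Mon n) (x : Pt n) :
    L.act (evm f) x = ∑ χ, (∏ i, L.weight f i (χ i)) * evm (choiceMon χ) x := by
  calc L.act (evm f) x = ∏ i, ∑ o, L.weight f i o * o.elim 1 x := by
        rw [act, evm, ← univ_inter f, ← prod_ite_mem]
        refine prod_congr rfl fun i _ => ?_
        by_cases hi : i ∈ f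
        · simp [weight, hi, actPt_apply]
        · simp [weight, hi]
    _ = _ := by simp_rw [Fintype.prod_sum, prod_mul_distrib, prod_elim_eq_evm]

lemma mcoeff_act_evm (L : LTA n) (f g : Mon n) :
    mcoeff (L.act (evm f)) g
      = ((univ.filter fun χ => L.Admissible f χ ∧ choiceMon χ = g).card : ZMod 2) := by
  calc mcoeff (L.act (evm f)) g
      = ∑ χ, (∏ i, L.weight f i (χ i)) * mcoeff (evm (choiceMon χ)) g := by
        simp_rw [mcoeff, act_evm_apply, mul_sum]
        exact sum_comm
    _ = _ := by simp only [prod_weight, mcoeff_evm, ite_zero_mul_ite_zero, mul_one, sum_boole]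

variable {L L₀ : LTA n} {K f : Mon n} {χ : Fin n → Option (Fin n)}

def Confined (L : LTA n) (K : Mon n) : Prop :=
  (∀ s t, t < s → L.A s t ≠ 0 → s ∈ K ∧ t ∉ K) ∧ ∀ r, L.b r ≠ 0 → r ∈ K

def SupportedBy (L₂ L L₀ : LTA n) : Prop :=
  (∀ s t, t < s → L₂.A s t ≠ 0 → L.A s t ≠ 0 ∨ L₀.A s t ≠ 0) ∧
    ∀ r, L₂.b r ≠ 0 → L.b r ≠ 0 ∨ L₀.b r ≠ 0

lemma Confined.of_supportedBy {L₂ : LTA n} (hL : L.Confined K) (hL₀ : L₀.Confined K)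
    (h : L₂.SupportedBy L L₀) : L₂.Confined K :=
  ⟨fun s t hts hA => (h.1 s t hts hA).elim (hL.1 s t hts) (hL₀.1 s t hts),
    fun r hb => (h.2 r hb).elim (hL.2 r) (hL₀.2 r)⟩

lemma le_of_A_ne_zero {i t : Fin n} (hA : L.A i t ≠ 0) : t ≤ i :=
  not_lt.mp fun hit => hA (L.lower i t hit)

lemma Admissible.of_eq_some (hχ : L.Admissible f χ) {i t : Fin n} (h : χ i = some t)
    (hti : t ≠ i) : i ∈ f ∧ t < i ∧ L.A i t ≠ 0 := by
  have hi : i ∈ f := by_contra fun hi => by simp [(hχ i).2 hi] at h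
  have hA : L.A i t ≠ 0 := by simpa [coeff, h] using (hχ i).1 hi
  exact ⟨hi, lt_of_le_of_ne (le_of_A_ne_zero hA) hti, hA⟩

lemma Confined.notMem_of_eq_some (hL : L.Confined K) (hχ : L.Admissible f χ) {i t : Fin n}
    (h : χ i = some t) (hti : t ≠ i) : t ∉ K :=
  have ⟨_, hlt, hA⟩ := hχ.of_eq_some h hti
  (hL.1 i t hlt hA).2

lemma Confined.mem_of_ne_some_self (hL : L.Confined K) (hχ : L.Admissible f χ) {i : Fin n}
    (hi : i ∈ f) (h : χ i ≠ some i) : i ∈ K := by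
  cases hc : χ i with
  | none => exact hL.2 i (by simpa [coeff, hc] using (hχ i).1 hi)
  | some t =>
    have ⟨_, hlt, hA⟩ := hχ.of_eq_some hc fun hti => h (hti ▸ hc)
    exact (hL.1 i t hlt hA).1

lemma Confined.eq_some_self_of_mem (hL : L.Confined K) (hχ : L.Admissible f χ) {j : Fin n}
    (hjK : j ∈ K) (hj : j ∈ choiceMon χ) : χ j = some j := by
  obtain ⟨i, hi⟩ := mem_choiceMon.mp hj
  by_cases hij : j = i
  · exact hij ▸ hi
  · exact absurd hjK (hL.notMem_of_eq_some hχ hi hij)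

lemma choiceMon_bind {χ₁ χ₂ : Fin n → Option (Fin n)}
    (h : ∀ k ∉ choiceMon χ₁, χ₂ k = none) :
    choiceMon (fun i => (χ₁ i).bind χ₂) = choiceMon χ₂ := by
  ext j
  simp only [mem_choiceMon, Option.bind_eq_some_iff]
  constructor
  · rintro ⟨i, k, -, hk⟩
    exact ⟨k, hk⟩
  · rintro ⟨k, hk⟩
    obtain ⟨i, hi⟩ := mem_choiceMon.mp (by_contra fun hk' => by simp [h k hk'] at hk)
    exact ⟨i, k, hi, hk⟩

/-- The variables that `χ` moves land outside `K`, where `χ₂` fixes them. -/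
lemma Confined.bind_eq (hL : L.Confined K) (hL₀ : L₀.Confined K) (hχ₁ : L.Admissible f χ)
    {χ₂ : Fin n → Option (Fin n)} (hχ₂ : L₀.Admissible (choiceMon χ) χ₂) (i : Fin n) :
    (χ i).bind χ₂ = χ i ∨ (χ i = some i ∧ (χ i).bind χ₂ = χ₂ i) := by
  cases hc : χ i with
  | none => simp
  | some k =>
    by_cases hki : k = i
    · subst hki; simp
    · left
      have hkK := hL.notMem_of_eq_some hχ₁ hc hki
      by_contra hk
      exact hkK (hL₀.mem_of_ne_some_self hχ₂ (mem_choiceMon.mpr ⟨i, hc⟩) hk)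

def ofChoice (f : Mon n) (χ : Fin n → Option (Fin n)) (h : ∀ i t, χ i = some t → t ≤ i) :
    LTA n where
  A i t := if t = i ∨ (i ∈ f ∧ χ i = some t) then 1 else 0
  b i := if i ∈ f ∧ χ i = none then 1 else 0
  diag i := by simp
  lower i t hit := if_neg fun h' => h'.elim (fun h'' => hit.ne' h'')
    fun h'' => (h i t h''.2).not_gt hit

lemma coeff_ofChoice {h : ∀ i t, χ i = some t → t ≤ i} (i : Fin n) (o : Option (Fin n)) :
    (ofChoice f χ h).coeff i o = if o = some i ∨ (i ∈ f ∧ χ i = o) then 1 else 0 := by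
  cases o <;> simp [coeff, ofChoice, eq_comm]

lemma admissible_ofChoice {h : ∀ i t, χ i = some t → t ≤ i} (hdom : ∀ i ∉ f, χ i = none) :
    (ofChoice f χ h).Admissible f χ :=
  fun i => ⟨fun hi => by simp [coeff_ofChoice, hi], hdom i⟩

/-- A row fixed by `χ'` but moved by `χ` lies in `K` and in the produced monomial, so it is
fixed by `χ` after all. -/
lemma Confined.eq_of_admissible_ofChoice {h : ∀ i t, χ i = some t → t ≤ i}
    (hL₂ : (ofChoice f χ h).Confined K) (hdom : ∀ i ∉ f, χ i = none)
    {χ' : Fin n → Option (Fin n)} (hχ' : (ofChoice f χ h).Admissible f χ')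
    (heq : choiceMon χ' = choiceMon χ) : χ' = χ := by
  funext i
  by_cases hi : i ∈ f
  · have hc := (hχ' i).1 hi
    rw [coeff_ofChoice] at hc
    rcases (ite_ne_right_iff.mp hc).1 with hfix | ⟨-, hχi⟩
    · rw [hfix]
      by_contra hne
      have hiK := hL₂.mem_of_ne_some_self (admissible_ofChoice hdom) hi (Ne.symm hne)
      refine hne (hL₂.eq_some_self_of_mem (admissible_ofChoice hdom) hiK ?_).symm
      exact heq ▸ mem_choiceMon.mpr ⟨i, hfix⟩
    · exact hχi.symm
  · rw [(hχ' i).2 hi, hdom i hi]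

lemma Confined.mcoeff_ofChoice {h : ∀ i t, χ i = some t → t ≤ i}
    (hL₂ : (ofChoice f χ h).Confined K) (hdom : ∀ i ∉ f, χ i = none) :
    mcoeff ((ofChoice f χ h).act (evm f)) (choiceMon χ) = 1 := by
  have : univ.filter (fun χ' => (ofChoice f χ h).Admissible f χ' ∧ choiceMon χ' = choiceMon χ)
      = {χ} :=
    eq_singleton_iff_unique_mem.mpr ⟨by simp [admissible_ofChoice hdom],
      fun χ' hχ' => hL₂.eq_of_admissible_ofChoice hdom (mem_filter.mp hχ').2.1
        (mem_filter.mp hχ').2.2⟩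
  rw [mcoeff_act_evm, this, card_singleton, Nat.cast_one]

lemma exists_admissible_of_mcoeff_ne_zero {g : Mon n} (h : mcoeff (L.act (evm f)) g ≠ 0) :
    ∃ χ, L.Admissible f χ ∧ choiceMon χ = g := by
  rw [mcoeff_act_evm] at h
  obtain ⟨χ, hχ⟩ := card_ne_zero.mp fun h0 => h (by rw [h0, Nat.cast_zero])
  exact ⟨χ, (mem_filter.mp hχ).2⟩

theorem Confined.exists_mcoeff_ne_zero (hL : L.Confined K) (hL₀ : L₀.Confined K)
    {f g p : Mon n} (hfg : mcoeff (L.act (evm f)) g ≠ 0)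
    (hgp : mcoeff (L₀.act (evm g)) p ≠ 0) :
    ∃ L₂ : LTA n, L₂.SupportedBy L L₀ ∧ mcoeff (L₂.act (evm f)) p ≠ 0 := by
  obtain ⟨χ₁, hχ₁, rfl⟩ := exists_admissible_of_mcoeff_ne_zero hfg
  obtain ⟨χ₂, hχ₂, rfl⟩ := exists_admissible_of_mcoeff_ne_zero hgp
  set χ : Fin n → Option (Fin n) := fun i => (χ₁ i).bind χ₂ with hχ
  have hcoeff : ∀ i ∈ f, L.coeff i (χ i) ≠ 0 ∨ L₀.coeff i (χ i) ≠ 0 := by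
    intro i hi
    rcases hL.bind_eq hL₀ hχ₁ hχ₂ i with h | ⟨hfix, h⟩
    · refine Or.inl ?_
      rw [show χ i = χ₁ i from h]
      exact (hχ₁ i).1 hi
    · refine Or.inr ?_
      rw [show χ i = χ₂ i from h]
      exact (hχ₂ i).1 (mem_choiceMon.mpr ⟨i, hfix⟩)
  have hdom : ∀ i ∉ f, χ i = none := fun i hi => by simp [hχ, (hχ₁ i).2 hi]
  have hmem : ∀ i t, χ i = some t → i ∈ f := fun i t h =>
    by_contra fun hi => by simp [hdom i hi] at h
  have hle : ∀ i t, χ i = some t → t ≤ i := fun i t h => by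
    have := hcoeff i (hmem i t h)
    rw [h] at this
    exact this.elim le_of_A_ne_zero le_of_A_ne_zero
  have hsupp : (ofChoice f χ hle).SupportedBy L L₀ := by
    refine ⟨fun s t hts hA => ?_, fun r hb => ?_⟩
    · have hst : s ∈ f ∧ χ s = some t := by
        simpa [ofChoice, hts.ne] using hA
      simpa [coeff, hst.2] using hcoeff s hst.1
    · have hr : r ∈ f ∧ χ r = none := by
        simpa [ofChoice] using hb
      simpa [coeff, hr.2] using hcoeff r hr.1
  refine ⟨ofChoice f χ hle, hsupp, ?_⟩
  rw [← choiceMon_bind (χ₁ := χ₁) fun k hk => (hχ₂ k).2 hk,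
    (hL.of_supportedBy hL₀ hsupp).mcoeff_ofChoice hdom]
  exact one_ne_zero

end LTA

lemma InSub.of_supportedBy {h1 h2 : Mon n} {O1 O2 D : Set (Mon n)} {L L₀ L₂ : LTA n}
    (hL : InSub h1 h2 O1 O2 D L) (hL₀ : InSub h1 h2 O1 O2 D L₀) (h : L₂.SupportedBy L L₀) :
    InSub h1 h2 O1 O2 D L₂ :=
  ⟨fun s t hts hA => (h.1 s t hts hA).elim (hL.1 s t hts) (hL₀.1 s t hts),
    fun r hb => (h.2 r hb).elim (hL.2 r) (hL₀.2 r)⟩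

namespace Setup

variable (C : Setup n)

lemma inter_subset_of_notMem_D {p : Mon n} (hp : p ∈ C.O1 ∪ C.O2) (hpD : p ∉ C.D) :
    C.h1 ∩ C.h2 ⊆ p :=
  by_contra fun h => hpD ⟨hp, h⟩

lemma notMem_h2_of_mem_O1 {p q : Mon n} {s t : Fin n} (hp : p ∈ (C.O1 \ C.O2) \ C.D)
    (hsq : s ∉ q) (htq : t ∉ q) (hts : t < s) (hh1 : C.h1 = insert s q)
    (hpq : p = insert t q) : t ∉ C.h2 := by
  obtain ⟨⟨hpO1, hpO2⟩, hpD⟩ := hp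
  have hK := C.inter_subset_of_notMem_D (Or.inl hpO1) hpD
  obtain ⟨hpI, -, hlt, hτ⟩ := hpO1
  subst hpq
  exact notMem_of_swap hsq htq hts.ne hh1 hK C.feas1 C.feas2 hlt
    fun hovd => hpO2 ⟨hpI, hovd, hτ⟩

lemma notMem_h1_of_mem_O2 {p q : Mon n} {s t : Fin n} (hp : p ∈ (C.O2 \ C.O1) \ C.D)
    (hsq : s ∉ q) (htq : t ∉ q) (hts : t < s) (hh2 : C.h2 = insert s q)
    (hpq : p = insert t q) : t ∉ C.h1 := by
  obtain ⟨⟨hpO2, hpO1⟩, hpD⟩ := hp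
  have hK := inter_comm C.h1 C.h2 ▸ C.inter_subset_of_notMem_D (Or.inr hpO2) hpD
  obtain ⟨hpI, -, hτ⟩ := hpO2
  subst hpq
  have hlt : rowIdx C.h2 < rowIdx (insert t q) := hh2 ▸ rowIdx_insert_lt_insert hsq htq hts
  exact notMem_of_swap hsq htq hts.ne hh2 hK C.feas2 C.feas1 (C.h12.trans hlt)
    fun hovd => hpO1 ⟨hpI, hovd, hlt, hτ⟩

lemma confined_of_mem {L : LTA n} (hL : C.Mem L) : L.Confined (C.h1 ∪ C.h2) := by
  refine ⟨fun s t hts hA => ?_, fun r hb => ?_⟩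
  · have ht : ∀ {h : Mon n} {q : Mon n}, t ∉ q → h = insert s q → t ∉ h := fun htq hh => by
      simp [hh, hts.ne, htq]
    rcases hL.1 s t hts hA with ⟨p, hp, q, hsq, htq, hh, hpq⟩ | ⟨p, hp, q, hsq, htq, hh, hpq⟩
    · exact ⟨mem_union_left _ (hh ▸ mem_insert_self s q),
        notMem_union.mpr ⟨ht htq hh, C.notMem_h2_of_mem_O1 hp hsq htq hts hh hpq⟩⟩
    · exact ⟨mem_union_right _ (hh ▸ mem_insert_self s q),
        notMem_union.mpr ⟨C.notMem_h1_of_mem_O2 hp hsq htq hts hh hpq, ht htq hh⟩⟩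
  · rcases hL.2 r hb with ⟨p, -, -, hh⟩ | ⟨p, -, -, hh⟩
    · exact mem_union_left _ (hh ▸ mem_insert_self r p)
    · exact mem_union_right _ (hh ▸ mem_insert_self r p)

end Setup

/-- for `(A,b) ∈ LTA(n,2)_{h2}^{h1}`, `g ∈ W` and
`f ∈ (O^c_{h1} ∩ O^c_{h2}) ∖ W`, the coefficient `⟨(A,b)·f⟩_g` vanishes. -/
theorem stmt15 {n : ℕ} (C : Setup n) (L : LTA n) (hL : C.Mem L)
    (g : Mon n) (hg : g ∈ C.W)
    (f : Mon n) (hf : f ∈ (C.O1c ∩ C.O2c) \ C.W) :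
    mcoeff (L.act (evm f)) g = 0 := by
  obtain ⟨-, L₀, hL₀, p, hp, hgp⟩ := hg
  by_contra hfg
  obtain ⟨L₂, hsupp, hfp⟩ :=
    (C.confined_of_mem hL).exists_mcoeff_ne_zero (C.confined_of_mem hL₀) hfg hgp
  exact hf.2 ⟨hf.1, L₂, InSub.of_supportedBy hL hL₀ hsupp, p, hp, hfp⟩
end

section
/- For every (A,b) ∈ LTA(n,2)_{h2}^{h1}, every g ∈ W, and every f ∈ (O_{h2}∖O_{h1}) ∩ D, the coefficient of g in (A,b)·f vanishes: ⟨(A,b)·f⟩_g = 0. -/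
open Finset

variable {n : ℕ}

/-! If `x_j` divides both `h1` and `h2`, every `(A,b) ∈ LTA(n,2)_{h2}^{h1}` has `e_j` as its
`j`-th column, so `(Ax+b)_i` involves `x_j` only for `i = j`. Hence `(A,b)` maps a function not
involving `x_j` to one not involving `x_j`, whose coefficients on monomials divisible by `x_j`
all vanish. An element `g ∈ W` has a nonzero coefficient on some `p ∉ D`, so
`∏_{j ∈ ind(h1)∩ind(h2)} x_j` divides `p` and hence `g`, while it does not divide `f ∈ D`. -/

lemma mcoeff_eq_zero_of_add_single {F : BF n} {S : Mon n} {j : Fin n} (hj : j ∈ S)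
    (hF : ∀ x, F (x + Pi.single j 1) = F x) : mcoeff F S = 0 := by
  have hflip : ∀ x : Pt n, x + Pi.single j 1 + Pi.single j 1 = x := fun x => by
    rw [add_assoc, ← Pi.single_add, show (1 + 1 : ZMod 2) = 0 from rfl, Pi.single_zero,
      add_zero]
  unfold mcoeff
  refine Finset.sum_involution (fun x _ => x + Pi.single j 1) (fun x _ => ?_) (fun x _ _ => ?_)
    (fun x hx => ?_) (fun x _ => hflip x)
  · rw [hF, CharTwo.add_self_eq_zero]
  · intro h
    simpa using congrFun h j
  · simp only [Finset.mem_filter, Finset.mem_univ, true_and, Pi.add_apply] at hx ⊢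
    intro i hi
    rw [Pi.single_eq_of_ne (ne_of_mem_of_not_mem hj hi).symm, add_zero]
    exact hx i hi

lemma LTA.act_evm_add_single (L : LTA n) {S : Mon n} {j : Fin n}
    (hcol : ∀ i ∈ S, L.A i j = 0) (x : Pt n) :
    L.act (evm S) (x + Pi.single j 1) = L.act (evm S) x := by
  unfold LTA.act evm LTA.actPt
  refine Finset.prod_congr rfl fun i hi => ?_
  simp [Matrix.mulVec_add, Matrix.mulVec_single, hcol i hi]

lemma InSub.A_eq_zero {h1 h2 : Mon n} {O1 O2 D : Set (Mon n)} {L : LTA n}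
    (hL : InSub h1 h2 O1 O2 D L) {i j : Fin n} (hj1 : j ∈ h1) (hj2 : j ∈ h2) (hij : i ≠ j) :
    L.A i j = 0 := by
  rcases lt_or_gt_of_ne hij with hlt | hgt
  · exact L.lower i j hlt
  · by_contra hA
    rcases hL.1 i j hgt hA with ⟨-, -, q, -, hjq, hh, -⟩ | ⟨-, -, q, -, hjq, hh, -⟩
    · rw [hh, Finset.mem_insert] at hj1
      exact hj1.elim (hij ∘ Eq.symm) hjq
    · rw [hh, Finset.mem_insert] at hj2
      exact hj2.elim (hij ∘ Eq.symm) hjq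

lemma InSub.mcoeff_act_evm_eq_zero {h1 h2 : Mon n} {O1 O2 D : Set (Mon n)} {L : LTA n}
    (hL : InSub h1 h2 O1 O2 D L) {f g : Mon n} {j : Fin n} (hj : j ∈ h1 ∩ h2) (hjf : j ∉ f)
    (hjg : j ∈ g) : mcoeff (L.act (evm f)) g = 0 := by
  rw [Finset.mem_inter] at hj
  exact mcoeff_eq_zero_of_add_single hjg <| L.act_evm_add_single fun i hi =>
    hL.A_eq_zero hj.1 hj.2 (ne_of_mem_of_not_mem hi hjf)

lemma Setup.inter_subset_of_mem_W (C : Setup n) {g : Mon n} (hg : g ∈ C.W) :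
    C.h1 ∩ C.h2 ⊆ g := by
  obtain ⟨-, L, hL, p, ⟨⟨hp1, -⟩, hpD⟩, hcoeff⟩ := hg
  have hKp : C.h1 ∩ C.h2 ⊆ p := by
    by_contra hK
    exact hpD ⟨Or.inl hp1, hK⟩
  intro j hj
  by_contra hjg
  exact hcoeff (InSub.mcoeff_act_evm_eq_zero hL hj hjg (hKp hj))

/-- for `(A,b) ∈ LTA(n,2)_{h2}^{h1}`, `g ∈ W` and
`f ∈ (O_{h2}∖O_{h1}) ∩ D`, the coefficient `⟨(A,b)·f⟩_g` vanishes. -/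
theorem stmt16 {n : ℕ} (C : Setup n) (L : LTA n) (hL : C.Mem L)
    (g : Mon n) (hg : g ∈ C.W)
    (f : Mon n) (hf : f ∈ (C.O2 \ C.O1) ∩ C.D) :
    mcoeff (L.act (evm f)) g = 0 := by
  obtain ⟨j, hj, hjf⟩ := Finset.not_subset.mp hf.2.2
  exact InSub.mcoeff_act_evm_eq_zero hL hj hjf (C.inter_subset_of_mem_W hg hj)
end
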